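/- Let A = [[A_ff, A_fc],[A_cf, A_cc]] be an invertible matrix on F ⊕ C with A_ff invertible, let P = [[W],[I]] and R = [Z, I], set δ_P = A_ff·W + A_fc, δ_R = Z·A_ff + A_cf, K = R·A·P. Suppose Rᵀ satisfies the weak approximation property with respect to A·Aᵀ with constant C_R, set C_Z = sqrt(C_R·(1 + ‖Z‖²)/‖A·Aᵀ‖), and assume C_Z·‖δ_P‖ < 1 (so K is invertible). Then for every F×F matrix Δ_F, with δ_F = I − Δ_F·A_ff, δ̂_F = I − A_ff·Δ_F, G = δ_F + Δ_F·δ_P·K⁻¹·δ_R, and G_pre = δ̂_F + δ_P·K⁻¹·δ_R·Δ_F, one has ‖G‖ ≤ ‖δ_F‖ + ‖Δ_F‖·‖A_ff‖·C_Z·‖δ_P‖/(1 − C_Z·‖δ_P‖) and ‖G_pre‖ ≤ ‖δ̂_F‖ + (1 + ‖δ̂_F‖)·C_Z·‖δ_P‖/(1 − C_Z·‖δ_P‖). -/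

import Mathlib

/-!
Let `S = A_cc - A_cf A_ff⁻¹ A_fc` be the Schur complement. Multiplying out the blocks gives
`K = S + δ_R A_ff⁻¹ δ_P`, so `M := K⁻¹ δ_R A_ff⁻¹ = (1 + T δ_P)⁻¹ T` with `T = S⁻¹ δ_R A_ff⁻¹`,
and `G = δ_F + Δ_F δ_P M A_ff`, `G_pre = δ̂_F + δ_P M (1 - δ̂_F)`. Everything therefore reduces
to `‖T‖ ≤ C_Z`, after which a Neumann series gives `‖M‖ ≤ C_Z / (1 - C_Z ‖δ_P‖)`.

The bound on `T` comes from the WAP: `T` is the `C`-block of `A⁻¹ Q` for `Q = [-I; Z]`, and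
`R Q = 0`, so `Qᵀ v = Qᵀ (v - Rᵀ w)` for every coarse `w`. Choosing `w` by the WAP yields
`‖A⁻¹ Q‖ ≤ √(C_R / ‖A Aᵀ‖) ‖Q‖`, and `‖Q‖ ≤ √(1 + ‖Z‖²)`.
-/

open Matrix
open scoped Matrix.Norms.L2Operator

/-- The Euclidean (ℓ²) norm of a finitely-supported real vector. -/
noncomputable def euclNorm {ι : Type*} [Fintype ι] (v : ι → ℝ) : ℝ :=
  ‖(WithLp.equiv 2 (ι → ℝ)).symm v‖

lemma le_sqrt_mul_of_sq_le_mul_sq {a b k : ℝ} (h : a ^ 2 ≤ k * b ^ 2) (hb : 0 ≤ b) :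
    a ≤ √k * b := by
  rw [← Real.sqrt_sq hb, ← Real.sqrt_mul' _ (sq_nonneg b)]
  exact (le_abs_self a).trans (Real.abs_le_sqrt h)

section EuclNorm

variable {ι κ : Type*} [Fintype ι] [Fintype κ]

lemma euclNorm_nonneg (v : ι → ℝ) : 0 ≤ euclNorm v := norm_nonneg _

lemma euclNorm_sq (v : ι → ℝ) : euclNorm v ^ 2 = ∑ i, v i ^ 2 := by
  rw [euclNorm, EuclideanSpace.norm_eq, Real.sq_sqrt (by positivity)]
  simp [sq_abs]

lemma euclNorm_sum_elim_sq (a : ι → ℝ) (b : κ → ℝ) :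
    euclNorm (Sum.elim a b) ^ 2 = euclNorm a ^ 2 + euclNorm b ^ 2 := by
  simp [euclNorm_sq, Fintype.sum_sum_type]

lemma euclNorm_mulVec_le [DecidableEq κ] (M : Matrix ι κ ℝ) (x : κ → ℝ) :
    euclNorm (M *ᵥ x) ≤ ‖M‖ * euclNorm x :=
  M.l2_opNorm_mulVec ((WithLp.equiv 2 (κ → ℝ)).symm x)

end EuclNorm

namespace Matrix

variable {ι κ μ : Type*} [Fintype ι] [Fintype κ]

lemma l2_opNorm_le_of_euclNorm_mulVec_le [DecidableEq κ] {M : Matrix ι κ ℝ} {c : ℝ} (hc : 0 ≤ c)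
    (h : ∀ x, euclNorm (M *ᵥ x) ≤ c * euclNorm x) : ‖M‖ ≤ c := by
  rw [l2_opNorm_def]
  refine ContinuousLinearMap.opNorm_le_bound _ hc fun x => ?_
  simpa [euclNorm, toLpLin_apply] using h (WithLp.equiv 2 (κ → ℝ) x)

lemma l2_opNorm_transpose [DecidableEq ι] [DecidableEq κ] (M : Matrix ι κ ℝ) : ‖Mᵀ‖ = ‖M‖ := by
  rw [← conjTranspose_eq_transpose_of_trivial, l2_opNorm_conjTranspose]

lemma l2_opNorm_one_le [DecidableEq ι] : ‖(1 : Matrix ι ι ℝ)‖ ≤ 1 := by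
  rw [← diagonal_one, l2_opNorm_diagonal]
  simpa using pi_norm_const_le (ι := ι) (1 : ℝ)

lemma l2_opNorm_fromRows_le [Fintype μ] [DecidableEq μ] (X : Matrix ι μ ℝ) (Y : Matrix κ μ ℝ) :
    ‖fromRows X Y‖ ≤ √(‖X‖ ^ 2 + ‖Y‖ ^ 2) := by
  refine l2_opNorm_le_of_euclNorm_mulVec_le (Real.sqrt_nonneg _) fun u => ?_
  rw [← Real.sqrt_sq (euclNorm_nonneg _), ← Real.sqrt_sq (euclNorm_nonneg u),
    ← Real.sqrt_mul (by positivity)]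
  refine Real.sqrt_le_sqrt ?_
  rw [fromRows_mulVec, euclNorm_sum_elim_sq, add_mul]
  have hX := euclNorm_mulVec_le X u
  have hY := euclNorm_mulVec_le Y u
  rw [← mul_pow, ← mul_pow]
  gcongr <;> exact euclNorm_nonneg _

lemma l2_opNorm_toRows₂_le [Fintype μ] [DecidableEq μ] (M : Matrix (ι ⊕ κ) μ ℝ) :
    ‖M.toRows₂‖ ≤ ‖M‖ := by
  refine l2_opNorm_le_of_euclNorm_mulVec_le (norm_nonneg _) fun u => ?_
  refine le_trans ?_ (euclNorm_mulVec_le M u)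
  rw [← fromRows_toRows M, fromRows_mulVec, toRows₂_fromRows]
  refine le_of_pow_le_pow_left₀ two_ne_zero (euclNorm_nonneg _) ?_
  rw [euclNorm_sum_elim_sq]
  exact le_add_of_nonneg_left (sq_nonneg _)

lemma l2_opNorm_inv_one_add_le [DecidableEq ι] {E : Matrix ι ι ℝ} (hE : ‖E‖ < 1) :
    ‖(1 + E)⁻¹‖ ≤ (1 - ‖E‖)⁻¹ := by
  have hE' : ‖-E‖ < 1 := by rwa [norm_neg]
  have hgeom := tsum_geometric_le_of_norm_lt_one (-E) hE'
  rw [norm_neg] at hgeom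
  rw [← sub_neg_eq_add, nonsing_inv_eq_ringInverse, NormedRing.inverse_one_sub _ hE']
  -- the inverse of `Units.oneSub` is the geometric series by definition
  change ‖∑' n : ℕ, (-E) ^ n‖ ≤ _
  linarith [l2_opNorm_one_le (ι := ι)]

section Schur

variable {α : Type*} [CommRing α] [DecidableEq ι] [DecidableEq κ]
  {Aff : Matrix ι ι α} {Afc : Matrix ι κ α} {Acf : Matrix κ ι α} {Acc : Matrix κ κ α}

lemma isUnit_schur_of_isUnit_fromBlocks (hA : IsUnit (fromBlocks Aff Afc Acf Acc))
    (hAff : IsUnit Aff) : IsUnit (Acc - Acf * Aff⁻¹ * Afc) := by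
  let := hAff.invertible
  rw [← invOf_eq_nonsing_inv]
  exact isUnit_fromBlocks_iff_of_invertible₁₁.mp hA

lemma toRows₂_inv_fromBlocks_mul_fromRows (hA : IsUnit (fromBlocks Aff Afc Acf Acc))
    (hAff : IsUnit Aff) (X : Matrix ι μ α) (Y : Matrix κ μ α) :
    ((fromBlocks Aff Afc Acf Acc)⁻¹ * fromRows X Y).toRows₂ =
      (Acc - Acf * Aff⁻¹ * Afc)⁻¹ * (Y - Acf * Aff⁻¹ * X) := by
  let := hAff.invertible
  let : Invertible (Acc - Acf * ⅟Aff * Afc) := by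
    rw [invOf_eq_nonsing_inv]; exact (isUnit_schur_of_isUnit_fromBlocks hA hAff).invertible
  let := hA.invertible
  rw [← invOf_eq_nonsing_inv (fromBlocks _ _ _ _), invOf_fromBlocks₁₁_eq, fromBlocks_mul_fromRows,
    toRows₂_fromRows]
  simp only [invOf_eq_nonsing_inv, Matrix.mul_sub, Matrix.neg_mul, Matrix.mul_assoc]
  abel

lemma fromCols_mul_fromBlocks_mul_fromRows_eq_schur_add (hAff : IsUnit Aff) (W : Matrix ι κ α)
    (Z : Matrix κ ι α) :
    fromCols Z (1 : Matrix κ κ α) * fromBlocks Aff Afc Acf Acc * fromRows W (1 : Matrix κ κ α) =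
      (Acc - Acf * Aff⁻¹ * Afc) + (Z * Aff + Acf) * Aff⁻¹ * (Aff * W + Afc) := by
  have hdet : IsUnit Aff.det := (isUnit_iff_isUnit_det Aff).mp hAff
  rw [Matrix.mul_assoc, fromBlocks_mul_fromRows, fromCols_mul_fromRows, Matrix.add_mul,
    Matrix.mul_assoc Z, mul_nonsing_inv _ hdet]
  simp only [Matrix.mul_one, Matrix.one_mul, Matrix.mul_add, Matrix.add_mul, Matrix.mul_assoc,
    nonsing_inv_mul_cancel_left _ _ hdet]
  abel

end Schur

lemma l2_opNorm_inv_add_mul_mul_le [DecidableEq ι] [DecidableEq κ] {S : Matrix κ κ ℝ}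
    (hS : IsUnit S) (B : Matrix κ ι ℝ) (D : Matrix ι κ ℝ) {c : ℝ} (hB : ‖S⁻¹ * B‖ ≤ c)
    (hcD : c * ‖D‖ < 1) : ‖(S + B * D)⁻¹ * B‖ ≤ c / (1 - c * ‖D‖) := by
  have hfac : S + B * D = S * (1 + S⁻¹ * B * D) := by
    rw [Matrix.mul_add, Matrix.mul_one, ← Matrix.mul_assoc, ← Matrix.mul_assoc,
      mul_nonsing_inv _ ((isUnit_iff_isUnit_det S).mp hS), Matrix.one_mul]
  have hBD : ‖S⁻¹ * B * D‖ ≤ c * ‖D‖ := (l2_opNorm_mul _ _).trans (by gcongr)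
  have hpos : 0 < 1 - c * ‖D‖ := by linarith
  rw [hfac, Matrix.mul_inv_rev, Matrix.mul_assoc, div_eq_inv_mul]
  calc ‖(1 + S⁻¹ * B * D)⁻¹ * (S⁻¹ * B)‖ ≤ ‖(1 + S⁻¹ * B * D)⁻¹‖ * ‖S⁻¹ * B‖ := l2_opNorm_mul _ _
    _ ≤ (1 - c * ‖D‖)⁻¹ * c := by
      gcongr
      exact (l2_opNorm_inv_one_add_le (hBD.trans_lt hcD)).trans (by gcongr)

lemma l2_opNorm_inv_mul_le_of_forall_exists_approx [Fintype μ] [DecidableEq ι] [DecidableEq μ]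
    {A : Matrix ι ι ℝ} (hA : IsUnit A) {R : Matrix κ ι ℝ} {Q : Matrix ι μ ℝ} (hRQ : R * Q = 0)
    {c : ℝ} (hc : 0 ≤ c) (happrox : ∀ v, ∃ w, euclNorm (v - Rᵀ *ᵥ w) ≤ c * euclNorm (Aᵀ *ᵥ v)) :
    ‖A⁻¹ * Q‖ ≤ c * ‖Q‖ := by
  rw [← l2_opNorm_transpose]
  refine l2_opNorm_le_of_euclNorm_mulVec_le (by positivity) fun u => ?_
  obtain ⟨w, hw⟩ := happrox ((A⁻¹)ᵀ *ᵥ u)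
  have hAv : Aᵀ *ᵥ ((A⁻¹)ᵀ *ᵥ u) = u := by
    rw [mulVec_mulVec, ← transpose_mul, nonsing_inv_mul _ ((isUnit_iff_isUnit_det A).mp hA),
      transpose_one, one_mulVec]
  have hQR : (A⁻¹ * Q)ᵀ *ᵥ u = Qᵀ *ᵥ ((A⁻¹)ᵀ *ᵥ u - Rᵀ *ᵥ w) := by
    rw [mulVec_sub, mulVec_mulVec, mulVec_mulVec, ← transpose_mul, ← transpose_mul, hRQ,
      transpose_zero, zero_mulVec, sub_zero]
  rw [hAv] at hw
  rw [hQR]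
  calc euclNorm (Qᵀ *ᵥ ((A⁻¹)ᵀ *ᵥ u - Rᵀ *ᵥ w)) ≤ ‖Qᵀ‖ * euclNorm ((A⁻¹)ᵀ *ᵥ u - Rᵀ *ᵥ w) :=
        euclNorm_mulVec_le _ _
    _ ≤ ‖Q‖ * (c * euclNorm u) := by rw [l2_opNorm_transpose]; gcongr
    _ = c * ‖Q‖ * euclNorm u := by ring

lemma l2_opNorm_schur_inv_mul_le_of_forall_exists_approx [DecidableEq ι] [DecidableEq κ]
    {Aff : Matrix ι ι ℝ} {Afc : Matrix ι κ ℝ} {Acf : Matrix κ ι ℝ} {Acc : Matrix κ κ ℝ}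
    (hA : IsUnit (fromBlocks Aff Afc Acf Acc)) (hAff : IsUnit Aff) (Z : Matrix κ ι ℝ) {c : ℝ}
    (hc : 0 ≤ c) (happrox : ∀ v, ∃ w, euclNorm (v - (fromCols Z (1 : Matrix κ κ ℝ))ᵀ *ᵥ w) ≤
      c * euclNorm ((fromBlocks Aff Afc Acf Acc)ᵀ *ᵥ v)) :
    ‖(Acc - Acf * Aff⁻¹ * Afc)⁻¹ * ((Z * Aff + Acf) * Aff⁻¹)‖ ≤ c * √(1 + ‖Z‖ ^ 2) := by
  set Q := fromRows (-1 : Matrix ι ι ℝ) Z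
  have hT : (Acc - Acf * Aff⁻¹ * Afc)⁻¹ * ((Z * Aff + Acf) * Aff⁻¹) =
      ((fromBlocks Aff Afc Acf Acc)⁻¹ * Q).toRows₂ := by
    rw [toRows₂_inv_fromBlocks_mul_fromRows hA hAff, Matrix.add_mul, Matrix.mul_assoc Z,
      mul_nonsing_inv _ ((isUnit_iff_isUnit_det Aff).mp hAff), Matrix.mul_one, Matrix.mul_neg,
      Matrix.mul_one, sub_neg_eq_add]
  have hRQ : fromCols Z (1 : Matrix κ κ ℝ) * Q = 0 := by
    simp [Q, fromCols_mul_fromRows]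
  have hneg_one : ‖(-1 : Matrix ι ι ℝ)‖ ^ 2 ≤ 1 :=
    pow_le_one₀ (norm_nonneg _) (by rw [norm_neg]; exact l2_opNorm_one_le)
  calc _ ≤ ‖(fromBlocks Aff Afc Acf Acc)⁻¹ * Q‖ := hT ▸ l2_opNorm_toRows₂_le _
    _ ≤ c * ‖Q‖ := l2_opNorm_inv_mul_le_of_forall_exists_approx hA hRQ hc happrox
    _ ≤ c * √(1 + ‖Z‖ ^ 2) := by
      gcongr
      exact (l2_opNorm_fromRows_le _ _).trans (by gcongr)

lemma l2_opNorm_add_mul_mul_le [DecidableEq ι] [DecidableEq κ] (E X : Matrix ι ι ℝ)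
    (Y : Matrix ι κ ℝ) {N : Matrix κ ι ℝ} {Aff : Matrix ι ι ℝ} (hAff : IsUnit Aff) {m : ℝ}
    (hN : ‖N * Aff⁻¹‖ ≤ m) : ‖E + X * Y * N‖ ≤ ‖E‖ + ‖X‖ * ‖Aff‖ * (‖Y‖ * m) := by
  have hXYN : X * Y * N = X * Y * (N * Aff⁻¹) * Aff := by
    simp only [Matrix.mul_assoc, nonsing_inv_mul _ ((isUnit_iff_isUnit_det Aff).mp hAff),
      Matrix.mul_one]
  have hXYM : ‖X * Y * (N * Aff⁻¹)‖ ≤ ‖X‖ * (‖Y‖ * m) :=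
    (l2_opNorm_mul _ _).trans (by rw [← mul_assoc]; gcongr; exact l2_opNorm_mul _ _)
  calc ‖E + X * Y * N‖ ≤ ‖E‖ + ‖X * Y * (N * Aff⁻¹)‖ * ‖Aff‖ :=
        (norm_add_le _ _).trans (by rw [hXYN]; gcongr; exact l2_opNorm_mul _ _)
    _ ≤ ‖E‖ + ‖X‖ * (‖Y‖ * m) * ‖Aff‖ := by gcongr
    _ = ‖E‖ + ‖X‖ * ‖Aff‖ * (‖Y‖ * m) := by ring

lemma l2_opNorm_add_mul_mul_le_of_eq_one_sub [DecidableEq ι] [DecidableEq κ] {E X : Matrix ι ι ℝ}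
    (Y : Matrix ι κ ℝ) {N : Matrix κ ι ℝ} {Aff : Matrix ι ι ℝ} (hE : E = 1 - Aff * X)
    (hAff : IsUnit Aff) {m : ℝ} (hN : ‖N * Aff⁻¹‖ ≤ m) :
    ‖E + Y * N * X‖ ≤ ‖E‖ + (1 + ‖E‖) * (‖Y‖ * m) := by
  have hYNX : Y * N * X = Y * (N * Aff⁻¹) * (1 - E) := by
    rw [hE, sub_sub_cancel]
    simp only [Matrix.mul_assoc,
      nonsing_inv_mul_cancel_left _ _ ((isUnit_iff_isUnit_det Aff).mp hAff)]
  have h1E : ‖1 - E‖ ≤ 1 + ‖E‖ := (norm_sub_le _ _).trans (by gcongr; exact l2_opNorm_one_le)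
  have hYM : ‖Y * (N * Aff⁻¹)‖ ≤ ‖Y‖ * m := (l2_opNorm_mul _ _).trans (by gcongr)
  calc ‖E + Y * N * X‖ ≤ ‖E‖ + ‖Y * (N * Aff⁻¹)‖ * ‖1 - E‖ :=
        (norm_add_le _ _).trans (by rw [hYNX]; gcongr; exact l2_opNorm_mul _ _)
    _ ≤ ‖E‖ + ‖Y‖ * m * (1 + ‖E‖) := by
      gcongr
      exact (norm_nonneg _).trans hYM
    _ = ‖E‖ + (1 + ‖E‖) * (‖Y‖ * m) := by ring

end Matrix

/-- **Theorem 3.5.** If `Rᵀ` satisfies the WAP with respect to `A·Aᵀ` with constant `C_R` and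
`C_Z·‖δ_P‖ < 1`, then for any `Δ_F`,
`‖G‖ ≤ ‖δ_F‖ + ‖Δ_F‖·‖A_ff‖·C_Z‖δ_P‖/(1 − C_Z‖δ_P‖)` and
`‖G_pre‖ ≤ ‖δ̂_F‖ + (1 + ‖δ̂_F‖)·C_Z‖δ_P‖/(1 − C_Z‖δ_P‖)`. -/
theorem wap_on_R_G_bounds
    {F C : Type*} [Fintype F] [Fintype C] [DecidableEq F] [DecidableEq C]
    (Aff : Matrix F F ℝ) (Afc : Matrix F C ℝ) (Acf : Matrix C F ℝ) (Acc : Matrix C C ℝ)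
    (W : Matrix F C ℝ) (Z : Matrix C F ℝ)
    (A : Matrix (F ⊕ C) (F ⊕ C) ℝ) (hA : A = fromBlocks Aff Afc Acf Acc)
    (hAinv : IsUnit A) (hAff : IsUnit Aff)
    (P : Matrix (F ⊕ C) C ℝ) (hP : P = fromRows W 1)
    (R : Matrix C (F ⊕ C) ℝ) (hR : R = fromCols Z 1)
    (K : Matrix C C ℝ) (hK : K = R * A * P)
    (δP : Matrix F C ℝ) (hδP : δP = Aff * W + Afc)
    (δR : Matrix C F ℝ) (hδR : δR = Z * Aff + Acf)
    (CR : ℝ)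
    (hWAP : ∀ v : (F ⊕ C) → ℝ, ∃ wc : C → ℝ,
      euclNorm (v - Rᵀ *ᵥ wc) ^ 2 ≤ (CR / ‖A * Aᵀ‖) * euclNorm (Aᵀ *ᵥ v) ^ 2)
    (CZ : ℝ) (hCZ : CZ = Real.sqrt (CR * (1 + ‖Z‖ ^ 2) / ‖A * Aᵀ‖))
    (hsmall : CZ * ‖δP‖ < 1) :
    ∀ ΔF : Matrix F F ℝ, ∀ δF δFhat G Gpre : Matrix F F ℝ,
      δF = 1 - ΔF * Aff → δFhat = 1 - Aff * ΔF →
      G = δF + ΔF * δP * K⁻¹ * δR → Gpre = δFhat + δP * K⁻¹ * δR * ΔF →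
      ‖G‖ ≤ ‖δF‖ + ‖ΔF‖ * ‖Aff‖ * (CZ * ‖δP‖) / (1 - CZ * ‖δP‖) ∧
      ‖Gpre‖ ≤ ‖δFhat‖ + (1 + ‖δFhat‖) * (CZ * ‖δP‖) / (1 - CZ * ‖δP‖) := by
  intro ΔF δF δFhat G Gpre _ hδFhat hG hGpre
  have happrox : ∀ v, ∃ wc, euclNorm (v - Rᵀ *ᵥ wc) ≤ √(CR / ‖A * Aᵀ‖) * euclNorm (Aᵀ *ᵥ v) :=
    fun v => (hWAP v).imp fun _ hwc => le_sqrt_mul_of_sq_le_mul_sq hwc (euclNorm_nonneg _)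
  subst hA hR
  have hT : ‖(Acc - Acf * Aff⁻¹ * Afc)⁻¹ * (δR * Aff⁻¹)‖ ≤ CZ := by
    rw [hCZ, mul_comm CR, mul_div_assoc, Real.sqrt_mul (by positivity), mul_comm, hδR]
    exact l2_opNorm_schur_inv_mul_le_of_forall_exists_approx hAinv hAff Z (Real.sqrt_nonneg _)
      happrox
  have hK_eq : K = (Acc - Acf * Aff⁻¹ * Afc) + δR * Aff⁻¹ * δP := by
    rw [hK, hP, fromCols_mul_fromBlocks_mul_fromRows_eq_schur_add hAff, hδR, hδP]
  have hM : ‖K⁻¹ * δR * Aff⁻¹‖ ≤ CZ / (1 - CZ * ‖δP‖) := by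
    rw [Matrix.mul_assoc, hK_eq]
    exact l2_opNorm_inv_add_mul_mul_le (isUnit_schur_of_isUnit_fromBlocks hAinv hAff) _ _ hT hsmall
  constructor
  · rw [hG, Matrix.mul_assoc _ K⁻¹]
    exact (l2_opNorm_add_mul_mul_le δF ΔF δP hAff hM).trans_eq (by ring)
  · rw [hGpre, Matrix.mul_assoc δP K⁻¹]
    exact (l2_opNorm_add_mul_mul_le_of_eq_one_sub δP hδFhat hAff hM).trans_eq (by ring)
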